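/- In the ε-perturbed model M⁺ of an episodic learning process M, for every policy π the stationary distribution ρ⁺_π of M⁺ restricted to the original state space is proportional to the stationary distribution ρ_π of M: ρ_π(s) = ρ⁺_π(s)/(1 - ρ⁺_π(s_null)) for all s ∈ S. -/

import Mathlib

open scoped ENNReal Classical
open Filter Topology

noncomputable section

def chainOf {σ A : Type} (P : σ → A → σ → ℝ≥0∞) (π : σ → A → ℝ≥0∞) (s s' : σ) : ℝ≥0∞ :=
  ∑' a, π s a * P s a s'

def stepProb {σ : Type} (M : σ → σ → ℝ≥0∞) : ℕ → σ → σ → ℝ≥0∞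
  | 0, s, s' => if s = s' then 1 else 0
  | t + 1, s, s' => ∑' u, stepProb M t s u * M u s'

def epiStep {σ : Type} (M : σ → σ → ℝ≥0∞) (T : Set σ) (s : σ) : ℕ → σ → ℝ≥0∞
  | 0, u => M s u
  | t + 1, u => ∑' v, if v ∈ T then 0 else epiStep M T s t v * M v u

def termHit {σ : Type} (M : σ → σ → ℝ≥0∞) (T : Set σ) (s : σ) (t : ℕ) : ℝ≥0∞ :=
  ∑' u, if u ∈ T then epiStep M T s t u else 0

def meanEpiLen {σ : Type} (M : σ → σ → ℝ≥0∞) (T : Set σ) (s : σ) : ℝ≥0∞ :=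
  ∑' t : ℕ, ((t : ℝ≥0∞) + 1) * termHit M T s t

def TermSet {S A : Type} (P : S → A → S → ℝ≥0∞) (ρ0 : S → ℝ≥0∞) : Set S :=
  {s | ∀ s₀, 0 < ρ0 s₀ → ∀ a a', P s a = P s₀ a'}

def ReachSet {σ : Type} (M : σ → σ → ℝ≥0∞) (ρ0 : σ → ℝ≥0∞) : Set σ :=
  {s | ∃ t : ℕ, 0 < ∑' s₀, ρ0 s₀ * stepProb M t s₀ s}

structure ELP (S A : Type) where
  P : S → A → S → ℝ≥0∞
  R : S → ℝ
  ρ0 : S → ℝ≥0∞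
  P_sum : ∀ s a, ∑' s', P s a s' = 1
  ρ0_sum : ∑' s, ρ0 s = 1
  homog : ∀ s s', 0 < ρ0 s → 0 < ρ0 s' → ∀ a a', P s a = P s' a'
  epi_fin : ∀ π : S → A → ℝ≥0∞, (∀ s, ∑' a, π s a = 1) → ∀ s ∈ TermSet P ρ0,
      (∑' t, termHit (chainOf P π) (TermSet P ρ0) s t) = 1 ∧
      meanEpiLen (chainOf P π) (TermSet P ρ0) s < ⊤

/-- The ε-perturbed Markov chain: a null state is inserted, entered from a terminal
state with probability ε; from the null state transitions mimic a terminal state. -/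
def perturbM {S : Type} (M : S → S → ℝ≥0∞) (T : Set S) (sT : S) (ε : ℝ≥0∞) :
    Option S → Option S → ℝ≥0∞
  | some s, some s' => if s ∈ T then (1 - ε) * M s s' else M s s'
  | some s, none => if s ∈ T then ε else 0
  | none, some s' => M sT s'
  | none, none => 0


/-!
A stationary sub-probability `g` of a chain in which every state of `T` has the same outgoing
row `M s₀` regenerates at each visit to `T`. Unrolling `g = g M` along paths avoiding `T` gives
`g s' = g(T) · ∑_{t<n} P(excursion from s₀ is at s' at time t+1) + (mass still avoiding T after
n steps)`, and the remainder vanishes as `n → ∞` when `g` lives on states that hit `T` almost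
surely. Hence every such `g` is `g(T)` times the expected visit counts `L` of one excursion from
`s₀`, so any two are proportional. Since episodes from the terminal state end almost surely, this
applies to `ρ` and, because `s_null` only relabels a fraction `ε` of the visits to `T`, also to
`ρ⁺` restricted to `S`; comparing total masses gives the factor `1 - ρ⁺(s_null)`.
-/

namespace EpisodicChain

theorem tsum_option {β : Type*} (f : Option β → ℝ≥0∞) :
    ∑' x, f x = f none + ∑' b, f (some b) := by
  have hsome := (Option.some_injective β).tsum_eq (f := fun x => if x = none then 0 else f x)
    (by rintro (_ | b) hx
        · simp at hx
        · exact ⟨b, rfl⟩)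
  simp only [reduceCtorEq, if_false] at hsome
  rw [ENNReal.tsum_eq_add_tsum_ite none, hsome]
  exact congrArg _ (tsum_congr fun x => by cases x <;> simp)

theorem forall_mem_reachSet_of_closed {σ : Type} {M : σ → σ → ℝ≥0∞} {ρ0 : σ → ℝ≥0∞}
    {Q : σ → Prop} (hinit : ∀ s, ρ0 s ≠ 0 → Q s) (hstep : ∀ x y, Q x → M x y ≠ 0 → Q y) :
    ∀ s ∈ ReachSet M ρ0, Q s := by
  have hpath : ∀ t x y, Q x → stepProb M t x y ≠ 0 → Q y := by
    intro t
    induction t with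
    | zero =>
      intro x y hx hxy
      obtain rfl : x = y := by_contra fun hne => hxy (if_neg hne)
      exact hx
    | succ t ih =>
      intro x y hx hxy
      obtain ⟨u, hu⟩ : ∃ u, stepProb M t x u * M u y ≠ 0 := by
        by_contra! h
        exact hxy (ENNReal.tsum_eq_zero.mpr h)
      rw [mul_ne_zero_iff] at hu
      exact hstep u y (ih x u hx hu.1) hu.2
  rintro s ⟨t, hpos⟩
  obtain ⟨s₀, hs₀⟩ : ∃ s₀, ρ0 s₀ * stepProb M t s₀ s ≠ 0 := by
    by_contra! h
    exact hpos.ne' (ENNReal.tsum_eq_zero.mpr h)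
  rw [mul_ne_zero_iff] at hs₀
  exact hpath t s₀ s (hinit s₀ hs₀.1) hs₀.2

section Avoidance

variable {S : Type} (M : S → S → ℝ≥0∞) (T : Set S)

/-- Probability of going from `v` to `s'` in `n` steps while the states at times
`0, …, n - 1` (but not necessarily at time `n`) avoid `T`. -/
def avoidStep : ℕ → S → S → ℝ≥0∞
  | 0, v, s' => if v = s' then 1 else 0
  | n + 1, v, s' => if v ∈ T then 0 else ∑' u, M v u * avoidStep n u s'

def survivalProb (n : ℕ) (v : S) : ℝ≥0∞ := ∑' s', avoidStep M T n v s'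

def HitsAlmostSurely (v : S) : Prop := ⨅ n, survivalProb M T n v = 0

variable {M T}

theorem survivalProb_zero (v : S) : survivalProb M T 0 v = 1 := by
  simp [survivalProb, avoidStep]

theorem survivalProb_succ (n : ℕ) (v : S) :
    survivalProb M T (n + 1) v = if v ∈ T then 0 else ∑' u, M v u * survivalProb M T n u := by
  by_cases hv : v ∈ T
  · simp [survivalProb, avoidStep, hv]
  · simp only [survivalProb, avoidStep, hv, if_false]
    rw [ENNReal.tsum_comm]
    exact tsum_congr fun u => ENNReal.tsum_mul_left

theorem survivalProb_antitone (hM : ∀ s, ∑' u, M s u = 1) (v : S) :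
    Antitone fun n => survivalProb M T n v := by
  have hle_one : ∀ n v, survivalProb M T n v ≤ 1 := by
    intro n
    induction n with
    | zero => exact fun v => (survivalProb_zero v).le
    | succ n ih =>
      intro v
      rw [survivalProb_succ]
      split_ifs
      · exact zero_le_one
      · calc ∑' u, M v u * survivalProb M T n u ≤ ∑' u, M v u :=
              ENNReal.tsum_le_tsum fun u => mul_le_of_le_one_right' (ih u)
          _ = 1 := hM v
  have hsucc : ∀ n v, survivalProb M T (n + 1) v ≤ survivalProb M T n v := by
    intro n
    induction n with
    | zero => exact fun v => (survivalProb_zero v).symm ▸ hle_one 1 v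
    | succ n ih =>
      intro v
      rw [survivalProb_succ, survivalProb_succ]
      split_ifs
      · exact le_rfl
      · exact ENNReal.tsum_le_tsum fun u => mul_le_mul_right (ih u) _
  exact antitone_nat_of_succ_le fun n => hsucc n v

theorem hitsAlmostSurely_of_mem {v : S} (hv : v ∈ T) : HitsAlmostSurely M T v :=
  le_antisymm ((iInf_le _ 1).trans (by simp [survivalProb_succ, hv])) zero_le

theorem HitsAlmostSurely.of_notMem (hM : ∀ s, ∑' u, M s u = 1) {u v : S}
    (hu : HitsAlmostSurely M T u) (huT : u ∉ T) (huv : M u v ≠ 0) : HitsAlmostSurely M T v := by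
  have hle : ∀ n, M u v * ⨅ m, survivalProb M T m v ≤ survivalProb M T n u := by
    intro n
    calc M u v * ⨅ m, survivalProb M T m v ≤ M u v * survivalProb M T n v :=
          mul_le_mul_right (iInf_le _ n) _
      _ ≤ ∑' w, M u w * survivalProb M T n w := ENNReal.le_tsum v
      _ = survivalProb M T (n + 1) u := by rw [survivalProb_succ, if_neg huT]
      _ ≤ survivalProb M T n u := survivalProb_antitone hM u n.le_succ
  have hzero : M u v * ⨅ m, survivalProb M T m v = 0 :=
    le_antisymm ((le_iInf hle).trans hu.le) zero_le
  exact (mul_eq_zero.mp hzero).resolve_left huv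

end Avoidance

section Episode

variable {S : Type} {M : S → S → ℝ≥0∞} {T : Set S} {s : S}

def episodeSurvival (M : S → S → ℝ≥0∞) (T : Set S) (s : S) (t : ℕ) : ℝ≥0∞ :=
  ∑' u, epiStep M T s t u

theorem episodeSurvival_eq_termHit_add (hM : ∀ s, ∑' u, M s u = 1) (t : ℕ) :
    episodeSurvival M T s t = termHit M T s t + episodeSurvival M T s (t + 1) := by
  have hsucc : episodeSurvival M T s (t + 1) = ∑' v, if v ∈ T then 0 else epiStep M T s t v := by
    simp only [episodeSurvival, epiStep]
    rw [ENNReal.tsum_comm]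
    refine tsum_congr fun v => ?_
    split_ifs
    · simp
    · rw [ENNReal.tsum_mul_left, hM v, mul_one]
  rw [hsucc, episodeSurvival, termHit, ← ENNReal.tsum_add]
  exact tsum_congr fun v => by split_ifs <;> simp

theorem episodeSurvival_add_sum_termHit (hM : ∀ s, ∑' u, M s u = 1) (n : ℕ) :
    episodeSurvival M T s n + ∑ r ∈ Finset.range n, termHit M T s r = 1 := by
  induction n with
  | zero => simpa [episodeSurvival, epiStep] using hM s
  | succ n ih =>
    rw [Finset.sum_range_succ, ← ih, episodeSurvival_eq_termHit_add hM n]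
    ring

theorem iInf_episodeSurvival (hM : ∀ s, ∑' u, M s u = 1)
    (hterm : ∑' t, termHit M T s t = 1) : ⨅ n, episodeSurvival M T s n = 0 := by
  have hpartial : ∀ n, episodeSurvival M T s n = 1 - ∑ r ∈ Finset.range n, termHit M T s r :=
    fun n => ENNReal.eq_sub_of_add_eq
      (ne_top_of_le_ne_top ENNReal.one_ne_top (le_add_self.trans
        (episodeSurvival_add_sum_termHit hM n).le))
      (episodeSurvival_add_sum_termHit hM n)
  simp_rw [hpartial, ← ENNReal.sub_iSup ENNReal.one_ne_top, ← ENNReal.tsum_eq_iSup_nat, hterm,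
    tsub_self]

/-- Forward (`epiStep`) and backward (`survivalProb`) decompositions of the episode agree. -/
theorem tsum_epiStep_mul_survivalProb :
    ∀ n t, ∑' v, epiStep M T s t v * survivalProb M T n v = episodeSurvival M T s (t + n)
  | 0, t => by simp only [survivalProb_zero, mul_one]; rfl
  | n + 1, t => by
    calc ∑' v, epiStep M T s t v * survivalProb M T (n + 1) v
        = ∑' v, ∑' u, (if v ∈ T then 0 else epiStep M T s t v * M v u) * survivalProb M T n u := by
          refine tsum_congr fun v => ?_
          rw [survivalProb_succ]
          split_ifs
          · simp
          · rw [← ENNReal.tsum_mul_left]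
            exact tsum_congr fun u => (mul_assoc _ _ _).symm
      _ = ∑' u, epiStep M T s (t + 1) u * survivalProb M T n u := by
          rw [ENNReal.tsum_comm]
          exact tsum_congr fun u => ENNReal.tsum_mul_right
      _ = episodeSurvival M T s (t + (n + 1)) := by
          rw [tsum_epiStep_mul_survivalProb n (t + 1), Nat.add_right_comm, Nat.add_assoc]

theorem hitsAlmostSurely_of_start (hM : ∀ s, ∑' u, M s u = 1)
    (hterm : ∑' t, termHit M T s t = 1) {v : S} (hv : M s v ≠ 0) : HitsAlmostSurely M T v := by
  have hle : ∀ n, M s v * ⨅ m, survivalProb M T m v ≤ episodeSurvival M T s n := by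
    intro n
    calc M s v * ⨅ m, survivalProb M T m v ≤ M s v * survivalProb M T n v :=
          mul_le_mul_right (iInf_le _ n) _
      _ ≤ ∑' w, M s w * survivalProb M T n w := ENNReal.le_tsum v
      _ = episodeSurvival M T s (0 + n) := tsum_epiStep_mul_survivalProb n 0
      _ = episodeSurvival M T s n := by rw [zero_add]
  have hzero : M s v * ⨅ m, survivalProb M T m v = 0 :=
    le_antisymm ((le_iInf hle).trans (iInf_episodeSurvival hM hterm).le) zero_le
  exact (mul_eq_zero.mp hzero).resolve_left hv

theorem HitsAlmostSurely.of_ne_zero (hM : ∀ s, ∑' u, M s u = 1) (hrow : ∀ u ∈ T, M u = M s)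
    (hterm : ∑' t, termHit M T s t = 1) {u v : S} (hu : HitsAlmostSurely M T u)
    (huv : M u v ≠ 0) : HitsAlmostSurely M T v := by
  by_cases huT : u ∈ T
  · exact hitsAlmostSurely_of_start hM hterm (hrow u huT ▸ huv)
  · exact hu.of_notMem hM huT huv

theorem hitsAlmostSurely_of_mem_reachSet (hM : ∀ s, ∑' u, M s u = 1) (hrow : ∀ u ∈ T, M u = M s)
    (hterm : ∑' t, termHit M T s t = 1) {ρ0 : S → ℝ≥0∞} (hinit : ∀ u, ρ0 u ≠ 0 → u ∈ T) :
    ∀ v ∈ ReachSet M ρ0, HitsAlmostSurely M T v :=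
  forall_mem_reachSet_of_closed (fun u hu => hitsAlmostSurely_of_mem (hinit u hu))
    fun _ _ hu huv => hu.of_ne_zero hM hrow hterm huv

end Episode

section CycleFormula

variable {S : Type} {M : S → S → ℝ≥0∞} {T : Set S} {s₀ : S}

def excursionStep (M : S → S → ℝ≥0∞) (T : Set S) (s₀ : S) (t : ℕ) (s' : S) : ℝ≥0∞ :=
  ∑' u, M s₀ u * avoidStep M T t u s'

/-- Expected number of visits to `s'` at times `1, …, τ` of the chain started at `s₀`, where
`τ ≥ 1` is the first return time to `T`. -/
def excursionVisits (M : S → S → ℝ≥0∞) (T : Set S) (s₀ s' : S) : ℝ≥0∞ :=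
  ∑' t, excursionStep M T s₀ t s'

theorem mul_tsum_mul_avoidStep (hrow : ∀ u ∈ T, M u = M s₀) (g : S → ℝ≥0∞) (n : ℕ) (w s' : S) :
    g w * ∑' v, M w v * avoidStep M T n v s' =
      T.indicator g w * excursionStep M T s₀ n s' + g w * avoidStep M T (n + 1) w s' := by
  by_cases hw : w ∈ T
  · simp [hw, hrow w hw, excursionStep, avoidStep]
  · simp [hw, avoidStep]

theorem stationary_eq_sum_excursionStep_add (hrow : ∀ u ∈ T, M u = M s₀) {g : S → ℝ≥0∞}
    (hg : ∀ s', g s' = ∑' s, g s * M s s') (n : ℕ) (s' : S) :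
    g s' = (∑' s, T.indicator g s) * ∑ t ∈ Finset.range n, excursionStep M T s₀ t s' +
      ∑' v, g v * avoidStep M T n v s' := by
  induction n with
  | zero => simp [avoidStep]
  | succ n ih =>
    have hrem : ∑' v, g v * avoidStep M T n v s' = (∑' s, T.indicator g s) *
        excursionStep M T s₀ n s' + ∑' v, g v * avoidStep M T (n + 1) v s' := by
      calc ∑' v, g v * avoidStep M T n v s'
          = ∑' v, ∑' w, g w * (M w v * avoidStep M T n v s') := by
            refine tsum_congr fun v => ?_
            rw [hg v, ← ENNReal.tsum_mul_right]
            simp_rw [mul_assoc]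
        _ = ∑' w, g w * ∑' v, M w v * avoidStep M T n v s' := by
            rw [ENNReal.tsum_comm]
            simp_rw [ENNReal.tsum_mul_left]
        _ = _ := by
            simp_rw [mul_tsum_mul_avoidStep hrow]
            rw [ENNReal.tsum_add, ENNReal.tsum_mul_right]
    rw [ih, hrem, Finset.sum_range_succ, mul_add, add_assoc]

/-- Monotone convergence for the counting measure, dominated by the finite mass of `g`. -/
theorem iInf_tsum_mul_survivalProb (hM : ∀ s, ∑' u, M s u = 1) {g : S → ℝ≥0∞}
    (hg : ∑' s, g s ≠ ⊤) (hsupp : ∀ v, g v ≠ 0 → HitsAlmostSurely M T v) :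
    ⨅ n, ∑' v, g v * survivalProb M T n v = 0 := by
  let _ : MeasurableSpace S := ⊤
  have : MeasurableSingletonClass S := ⟨fun _ => trivial⟩
  have hanti : Antitone fun n v => g v * survivalProb M T n v :=
    fun m n hmn v => mul_le_mul_right (survivalProb_antitone hM v hmn) _
  have hpointwise : ∀ v, ⨅ n, g v * survivalProb M T n v = 0 := by
    intro v
    by_cases hv : g v = 0
    · simp [hv]
    · rw [← ENNReal.mul_iInf_of_ne hv (ne_top_of_le_ne_top hg (ENNReal.le_tsum v)),
        hsupp v hv, mul_zero]
  simp_rw [← MeasureTheory.lintegral_count]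
  rw [← MeasureTheory.lintegral_iInf (fun n => measurable_from_top) hanti
    (by simpa [MeasureTheory.lintegral_count, survivalProb_zero] using hg)]
  simp [hpointwise]

theorem stationary_eq_mul_excursionVisits (hM : ∀ s, ∑' u, M s u = 1)
    (hrow : ∀ u ∈ T, M u = M s₀) {g : S → ℝ≥0∞} (hg : ∀ s', g s' = ∑' s, g s * M s s')
    (hg_fin : ∑' s, g s ≠ ⊤) (hsupp : ∀ v, g v ≠ 0 → HitsAlmostSurely M T v) (s' : S) :
    g s' = (∑' s, T.indicator g s) * excursionVisits M T s₀ s' := by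
  set c := ∑' s, T.indicator g s
  refine le_antisymm ?_ ?_
  · have hle : ∀ n, g s' ≤ c * excursionVisits M T s₀ s' + ∑' v, g v * survivalProb M T n v := by
      intro n
      rw [stationary_eq_sum_excursionStep_add hrow hg n s']
      gcongr
      · exact ENNReal.sum_le_tsum _
      · exact ENNReal.le_tsum _
    calc g s' ≤ ⨅ n, (c * excursionVisits M T s₀ s' + ∑' v, g v * survivalProb M T n v) :=
          le_iInf hle
      _ = c * excursionVisits M T s₀ s' := by
          rw [← ENNReal.add_iInf, iInf_tsum_mul_survivalProb hM hg_fin hsupp, add_zero]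
  · rw [excursionVisits, ENNReal.tsum_eq_iSup_nat, ENNReal.mul_iSup]
    refine iSup_le fun n => ?_
    rw [stationary_eq_sum_excursionStep_add hrow hg n s']
    exact le_self_add

theorem eq_tsum_mul_of_stationary (hM : ∀ s, ∑' u, M s u = 1) (hrow : ∀ u ∈ T, M u = M s₀)
    {g h : S → ℝ≥0∞} (hg : ∀ s', g s' = ∑' s, g s * M s s') (hg1 : ∑' s, g s = 1)
    (hg_supp : ∀ v, g v ≠ 0 → HitsAlmostSurely M T v)
    (hh : ∀ s', h s' = ∑' s, h s * M s s') (hh_fin : ∑' s, h s ≠ ⊤)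
    (hh_supp : ∀ v, h v ≠ 0 → HitsAlmostSurely M T v) (s' : S) :
    h s' = (∑' s, h s) * g s' := by
  set L := excursionVisits M T s₀
  have hgL := stationary_eq_mul_excursionVisits hM hrow hg (by simp [hg1]) hg_supp
  have hhL := stationary_eq_mul_excursionVisits hM hrow hh hh_fin hh_supp
  have hg_tot : (∑' s, T.indicator g s) * ∑' s, L s = 1 := by
    rw [← hg1, ← ENNReal.tsum_mul_left]
    exact tsum_congr fun s => (hgL s).symm
  have hh_tot : ∑' s, h s = (∑' s, T.indicator h s) * ∑' s, L s := by
    rw [← ENNReal.tsum_mul_left]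
    exact tsum_congr hhL
  rw [hhL s', hgL s', hh_tot]
  calc (∑' s, T.indicator h s) * L s'
      = (∑' s, T.indicator h s) * ((∑' s, T.indicator g s) * ∑' s, L s) * L s' := by
        rw [hg_tot, mul_one]
    _ = _ := by ring

end CycleFormula

section Perturbation

variable {S : Type} {M : S → S → ℝ≥0∞} {T : Set S} {sT : S} {ε : ℝ≥0∞}

theorem tsum_mul_perturbM_none (ρp : Option S → ℝ≥0∞) :
    ∑' x, ρp x * perturbM M T sT ε x none = ε * ∑' s, T.indicator (fun s => ρp (some s)) s := by
  rw [tsum_option, ← ENNReal.tsum_mul_left]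
  simp only [perturbM, mul_zero, zero_add]
  exact tsum_congr fun s => by by_cases hs : s ∈ T <;> simp [hs, mul_comm]

theorem none_ne_one_of_stationary_perturbM {ρp : Option S → ℝ≥0∞}
    (hρp : ∀ y, ρp y = ∑' x, ρp x * perturbM M T sT ε x y) (hρp1 : ∑' x, ρp x = 1) :
    ρp none ≠ 1 := by
  intro h1
  have hsome : ∀ u, ρp (some u) = 0 := by
    rw [tsum_option, h1] at hρp1
    exact ENNReal.tsum_eq_zero.mp (by simpa using hρp1)
  have := (hρp none).trans (tsum_mul_perturbM_none ρp)
  simp [hsome, h1] at this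

theorem mul_perturbM_add (hrow : ∀ u ∈ T, M u = M sT) (hε : ε ≤ 1) (f : S → ℝ≥0∞) (s s' : S) :
    f s * perturbM M T sT ε (some s) (some s') + ε * T.indicator f s * M sT s' = f s * M s s' := by
  by_cases hs : s ∈ T
  · simp only [perturbM, hs, if_true, Set.indicator_of_mem, hrow s hs]
    calc f s * ((1 - ε) * M sT s') + ε * f s * M sT s' = f s * ((1 - ε + ε) * M sT s') := by ring
      _ = f s * M sT s' := by rw [tsub_add_cancel_of_le hε, one_mul]
  · simp [perturbM, hs]

/-- The visits to `s_null` are a fraction `ε` of the exits from `T` and are followed by a terminal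
transition, so deleting them leaves a stationary measure of `M`. -/
theorem stationary_some_of_stationary_perturbM (hrow : ∀ u ∈ T, M u = M sT) (hε : ε ≤ 1)
    {ρp : Option S → ℝ≥0∞} (hρp : ∀ y, ρp y = ∑' x, ρp x * perturbM M T sT ε x y) (s' : S) :
    ρp (some s') = ∑' s, ρp (some s) * M s s' := by
  have hnone := (hρp none).trans (tsum_mul_perturbM_none ρp)
  calc ρp (some s')
      = ρp none * M sT s' + ∑' s, ρp (some s) * perturbM M T sT ε (some s) (some s') := by
        rw [hρp (some s'), tsum_option]
        rfl
    _ = ∑' s, (ρp (some s) * perturbM M T sT ε (some s) (some s') +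
          ε * T.indicator (fun s => ρp (some s)) s * M sT s') := by
        rw [ENNReal.tsum_add, ENNReal.tsum_mul_right, ENNReal.tsum_mul_left, ← hnone, add_comm]
    _ = ∑' s, ρp (some s) * M s s' :=
        tsum_congr fun s => mul_perturbM_add hrow hε (fun s => ρp (some s)) s s'

theorem hitsAlmostSurely_of_some_mem_reachSet_perturbM (hM : ∀ s, ∑' u, M s u = 1)
    (hrow : ∀ u ∈ T, M u = M sT) (hterm : ∑' t, termHit M T sT t = 1) (hsT : sT ∈ T)
    {ρ0 : S → ℝ≥0∞} (hinit : ∀ u, ρ0 u ≠ 0 → u ∈ T) {v : S}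
    (hv : some v ∈ ReachSet (perturbM M T sT ε) (fun x => Option.elim x 0 ρ0)) :
    HitsAlmostSurely M T v := by
  refine forall_mem_reachSet_of_closed (Q := fun x => ∀ w ∈ x, HitsAlmostSurely M T w)
    ?_ ?_ _ hv v rfl
  · rintro (_ | u) hu w hw
    · exact absurd rfl hu
    · obtain rfl : u = w := Option.some_injective _ hw
      exact hitsAlmostSurely_of_mem (hinit u hu)
  · rintro x (_ | w) hx hxw w' hw'
    · exact absurd hw' (by simp)
    · obtain rfl : w = w' := Option.some_injective _ hw'
      cases x with
      | none => exact (hitsAlmostSurely_of_mem hsT).of_ne_zero hM hrow hterm hxw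
      | some u =>
        have huw : M u w ≠ 0 := fun h => hxw (by simp [perturbM, h])
        exact (hx u rfl).of_ne_zero hM hrow hterm huw

end Perturbation

section EpisodicLearningProcess

variable {S A : Type}

theorem tsum_chainOf {P : S → A → S → ℝ≥0∞} {π : S → A → ℝ≥0∞}
    (hP : ∀ s a, ∑' s', P s a s' = 1) (hπ : ∀ s, ∑' a, π s a = 1) (s : S) :
    ∑' s', chainOf P π s s' = 1 := by
  simp only [chainOf]
  rw [ENNReal.tsum_comm]
  simp_rw [ENNReal.tsum_mul_left, hP, mul_one, hπ]

theorem mem_termSet_of_pos (E : ELP S A) {s : S} (hs : 0 < E.ρ0 s) : s ∈ TermSet E.P E.ρ0 :=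
  fun _ h₀ a a' => E.homog s _ hs h₀ a a'

theorem chainOf_eq_of_mem_termSet {P : S → A → S → ℝ≥0∞} {ρ0 : S → ℝ≥0∞} {π : S → A → ℝ≥0∞}
    (hπ : ∀ s, ∑' a, π s a = 1) {s₀ s t : S} (h₀ : 0 < ρ0 s₀) (hs : s ∈ TermSet P ρ0)
    (ht : t ∈ TermSet P ρ0) : chainOf P π s = chainOf P π t := by
  obtain ⟨a₀⟩ : Nonempty A := by
    by_contra! hA
    simpa using hπ s
  have hrow : ∀ u ∈ TermSet P ρ0, chainOf P π u = P s₀ a₀ := by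
    intro u hu
    funext s'
    calc ∑' a, π u a * P u a s' = ∑' a, π u a * P s₀ a₀ s' :=
          tsum_congr fun a => by rw [hu s₀ h₀ a a₀]
      _ = P s₀ a₀ s' := by rw [ENNReal.tsum_mul_right, hπ u, one_mul]
  rw [hrow s hs, hrow t ht]

end EpisodicLearningProcess

end EpisodicChain

open EpisodicChain

theorem stmt_8_general {S A : Type} (E : ELP S A)
    (π : S → A → ℝ≥0∞) (hπ : ∀ s, ∑' a, π s a = 1)
    (ε : ℝ≥0∞) (hε1 : ε < 1)
    (sT : S) (hsT : 0 < E.ρ0 sT)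
    (ρ : S → ℝ≥0∞) (hρ1 : ∑' s, ρ s = 1)
    (hρ : ∀ s', ρ s' = ∑' s, ρ s * chainOf E.P π s s')
    (hρsupp : ∀ s, s ∉ ReachSet (chainOf E.P π) E.ρ0 → ρ s = 0)
    (ρp : Option S → ℝ≥0∞) (hρp1 : ∑' x, ρp x = 1)
    (hρp : ∀ y, ρp y = ∑' x, ρp x * perturbM (chainOf E.P π) (TermSet E.P E.ρ0) sT ε x y)
    (hρpsupp : ∀ x, x ∉ ReachSet (perturbM (chainOf E.P π) (TermSet E.P E.ρ0) sT ε)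
        (fun x => Option.elim x 0 E.ρ0) → ρp x = 0) :
    ∀ s : S, ρ s = ρp (some s) / (1 - ρp none) := by
  intro s
  set M := chainOf E.P π
  set T := TermSet E.P E.ρ0
  have hM : ∀ u, ∑' v, M u v = 1 := tsum_chainOf E.P_sum hπ
  have hsTT : sT ∈ T := mem_termSet_of_pos E hsT
  have hrow : ∀ u ∈ T, M u = M sT := fun u hu => chainOf_eq_of_mem_termSet hπ hsT hu hsTT
  have hterm : ∑' t, termHit M T sT t = 1 := (E.epi_fin π hπ sT hsTT).1
  have hinit : ∀ u, E.ρ0 u ≠ 0 → u ∈ T := fun u hu => mem_termSet_of_pos E (pos_iff_ne_zero.mpr hu)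
  have hρ_hits : ∀ v, ρ v ≠ 0 → HitsAlmostSurely M T v := fun v hv =>
    hitsAlmostSurely_of_mem_reachSet hM hrow hterm hinit v (not_imp_comm.mp (hρsupp v) hv)
  have hρp_hits : ∀ v, ρp (some v) ≠ 0 → HitsAlmostSurely M T v := fun v hv =>
    hitsAlmostSurely_of_some_mem_reachSet_perturbM hM hrow hterm hsTT hinit
      (not_imp_comm.mp (hρpsupp _) hv)
  have hnull_le : ρp none ≤ 1 := hρp1 ▸ ENNReal.le_tsum none
  have hmass : ∑' u, ρp (some u) = 1 - ρp none :=
    ENNReal.eq_sub_of_add_eq (ne_top_of_le_ne_top ENNReal.one_ne_top hnull_le)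
      (by rw [add_comm, ← tsum_option, hρp1])
  have hprop : ρp (some s) = (1 - ρp none) * ρ s := by
    rw [← hmass]
    exact eq_tsum_mul_of_stationary hM hrow hρ hρ1 hρ_hits
      (stationary_some_of_stationary_perturbM hrow hε1.le hρp)
      (by simp [hmass]) hρp_hits s
  have hnull : ρp none < 1 := lt_of_le_of_ne hnull_le (none_ne_one_of_stationary_perturbM hρp hρp1)
  exact (ENNReal.eq_div_iff (tsub_pos_of_lt hnull).ne'
    (ENNReal.sub_ne_top ENNReal.one_ne_top)).mpr hprop.symm

/-- The stationary distribution of the ε-perturbed model, restricted to the original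
state space, is proportional to that of the original model:
ρ(s) = ρ⁺(s) / (1 - ρ⁺(s_null)). -/
theorem stmt_8 {S A : Type} [Countable S] [Countable A] (E : ELP S A)
    (π : S → A → ℝ≥0∞) (hπ : ∀ s, ∑' a, π s a = 1)
    (ε : ℝ≥0∞) (hε0 : 0 < ε) (hε1 : ε < 1)
    (sT : S) (hsT : 0 < E.ρ0 sT)
    (ρ : S → ℝ≥0∞) (hρ1 : ∑' s, ρ s = 1)
    (hρ : ∀ s', ρ s' = ∑' s, ρ s * chainOf E.P π s s')
    (hρsupp : ∀ s, s ∉ ReachSet (chainOf E.P π) E.ρ0 → ρ s = 0)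
    (ρp : Option S → ℝ≥0∞) (hρp1 : ∑' x, ρp x = 1)
    (hρp : ∀ y, ρp y = ∑' x, ρp x * perturbM (chainOf E.P π) (TermSet E.P E.ρ0) sT ε x y)
    (hρpsupp : ∀ x, x ∉ ReachSet (perturbM (chainOf E.P π) (TermSet E.P E.ρ0) sT ε)
        (fun x => Option.elim x 0 E.ρ0) → ρp x = 0) :
    ∀ s : S, ρ s = ρp (some s) / (1 - ρp none) :=
  stmt_8_general E π hπ ε hε1 sT hsT ρ hρ1 hρ hρsupp ρp hρp1 hρp hρpsupp
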